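/- arXiv:1503.02849 — 5 statements merged into one kernel-verified Lean document; each statement's English description precedes it below -/
import Mathlib

section
/- For every u ∈ ℂ with Re u ≤ 0, the Laplace/characteristic transform of the Bessel distribution μ_{α,β} satisfies ∫_{[0,∞)} e^{ux} μ_{α,β}(dx) = exp(αu/(β - u)). -/
open MeasureTheory ENNReal

/-- Modified Bessel function of the first kind of order 1. -/
noncomputable def besselI1 (r : ℝ) : ℝ :=
  (r / 2) * ∑' k : ℕ, (r ^ 2 / 4) ^ k / (Nat.factorial k * Nat.factorial (k + 1))

/-- The Bessel distribution with parameters `α, β > 0`. -/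
noncomputable def besselMeasure (α β : ℝ) : Measure ℝ :=
  (ENNReal.ofReal (Real.exp (-α)) • (Measure.dirac (0 : ℝ))) +
    (volume.restrict (Set.Ioi (0 : ℝ))).withDensity
      (fun x => ENNReal.ofReal
        (β * Real.exp (-α - β * x) * Real.sqrt (α / (β * x)) *
          besselI1 (2 * Real.sqrt (α * β * x))))

/-!
For `x > 0` the power series of `I₁` writes the density of `μ_{α,β}` as
`∑_{n ≥ 1} e^{-α} αⁿ/n! · βⁿ x^{n-1} e^{-βx}/(n-1)!`, so `μ_{α,β}` is the Poisson(`α`) mixture of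
the Gamma(`n`, `β`) laws (the atom `e^{-α} δ₀` being the term `n = 0`). The Gamma(`n`, `β`) law
has transform `(β/(β-u))ⁿ`, and the norms of the terms are summable for `Re u < β`, so
integrating term by term gives `e^{-α} ∑ αⁿ/n! (β/(β-u))ⁿ = exp (α (β/(β-u) - 1))`.
-/

open Set Filter Topology Complex
open scoped Nat

theorem integrable_tsum_of_summable_integral_norm {α E : Type*} [MeasurableSpace α]
    {μ : Measure α} [NormedAddCommGroup E] [CompleteSpace E] {F : ℕ → α → E}
    (hF_int : ∀ i, Integrable (F i) μ) (hF_sum : Summable fun i ↦ ∫ a, ‖F i a‖ ∂μ) :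
    Integrable (fun a ↦ ∑' i, F i a) μ := by
  have hF_meas : ∀ i, AEMeasurable (fun a ↦ ‖F i a‖ₑ) μ := fun i ↦ (hF_int i).1.enorm
  have h_lintegral : ∫⁻ a, ∑' i, ‖F i a‖ₑ ∂μ < ∞ := by
    simp_rw [lintegral_tsum hF_meas, ← ofReal_integral_norm_eq_lintegral_enorm (hF_int _),
      ← ENNReal.ofReal_tsum_of_nonneg (fun i ↦ integral_nonneg fun _ ↦ norm_nonneg _) hF_sum]
    exact ofReal_lt_top
  have h_summable : ∀ᵐ a ∂μ, Summable fun i ↦ ‖F i a‖ := by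
    filter_upwards [ae_lt_top' (AEMeasurable.tsum hF_meas) h_lintegral.ne] with a ha
    exact tsum_enorm_ne_top_iff_summable_norm.1 ha.ne
  refine ⟨aestronglyMeasurable_of_tendsto_ae atTop (f := fun n a ↦ ∑ i ∈ Finset.range n, F i a)
    (fun n ↦ Finset.aestronglyMeasurable_fun_sum _ fun i _ ↦ (hF_int i).1) ?_, ?_⟩
  · filter_upwards [h_summable] with a ha using ha.of_norm.hasSum.tendsto_sum_nat
  · exact (lintegral_mono fun _ ↦ enorm_tsum_le_tsum_enorm).trans_lt h_lintegral

lemma integrableOn_pow_mul_exp_neg_mul_Ioi {b : ℝ} (hb : 0 < b) (n : ℕ) :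
    IntegrableOn (fun x : ℝ ↦ x ^ n * Real.exp (-b * x)) (Ioi 0) := by
  refine (integrableOn_rpow_mul_exp_neg_mul_rpow (s := n) (p := 1)
    (neg_one_lt_zero.trans_le n.cast_nonneg) one_pos hb).congr_fun (fun x _ ↦ ?_) measurableSet_Ioi
  simp [Real.rpow_natCast]

lemma norm_pow_mul_cexp {x : ℝ} (hx : 0 ≤ x) (n : ℕ) (c : ℂ) :
    ‖(x : ℂ) ^ n * cexp (c * x)‖ = x ^ n * Real.exp (c.re * x) := by
  simp [norm_exp, abs_of_nonneg hx]

lemma integrableOn_pow_mul_cexp_Ioi {c : ℂ} (hc : c.re < 0) (n : ℕ) :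
    IntegrableOn (fun x : ℝ ↦ (x : ℂ) ^ n * cexp (c * x)) (Ioi 0) := by
  refine (integrableOn_pow_mul_exp_neg_mul_Ioi (neg_pos.2 hc) n).mono' (by fun_prop) ?_
  filter_upwards [ae_restrict_mem measurableSet_Ioi] with x hx
  rw [norm_pow_mul_cexp (le_of_lt hx), neg_neg]

lemma tendsto_pow_mul_cexp_atTop {c : ℂ} (hc : c.re < 0) (n : ℕ) :
    Tendsto (fun x : ℝ ↦ (x : ℂ) ^ n * cexp (c * x)) atTop (𝓝 0) := by
  refine tendsto_zero_iff_norm_tendsto_zero.2 <|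
    (tendsto_rpow_mul_exp_neg_mul_atTop_nhds_zero n _ (neg_pos.2 hc)).congr' ?_
  filter_upwards [eventually_ge_atTop 0] with x hx
  rw [norm_pow_mul_cexp hx, neg_neg, Real.rpow_natCast]

lemma integral_pow_mul_cexp_Ioi {c : ℂ} (hc : c.re < 0) (n : ℕ) :
    ∫ x : ℝ in Ioi 0, (x : ℂ) ^ n * cexp (c * x) = n ! / (-c) ^ (n + 1) := by
  induction n with
  | zero => simp [integral_exp_mul_complex_Ioi hc, div_neg, neg_div]
  | succ n ih =>
    have hc0 : c ≠ 0 := by rintro rfl; simp at hc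
    have hderiv_pow : ∀ x ∈ Ioi (0 : ℝ),
        HasDerivAt (fun x : ℝ ↦ (x : ℂ) ^ (n + 1)) ((n + 1 : ℂ) * (x : ℂ) ^ n) x := fun x _ ↦ by
      simpa using (hasDerivAt_pow (n + 1) (x : ℂ)).comp_ofReal
    have hderiv_exp : ∀ x ∈ Ioi (0 : ℝ),
        HasDerivAt (fun x : ℝ ↦ cexp (c * x) / c) (cexp (c * x)) x := fun x _ ↦ by
      have := (((hasDerivAt_id (x : ℂ)).const_mul c).cexp.div_const c).comp_ofReal
      simpa [mul_div_cancel_left₀ _ hc0, mul_comm] using this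
    have h_zero : Tendsto (fun x : ℝ ↦ (x : ℂ) ^ (n + 1) * (cexp (c * x) / c)) (𝓝[>] 0) (𝓝 0) := by
      have hcont : Continuous fun x : ℝ ↦ (x : ℂ) ^ (n + 1) * (cexp (c * x) / c) := by fun_prop
      simpa using (hcont.tendsto 0).mono_left nhdsWithin_le_nhds
    have h_infty : Tendsto (fun x : ℝ ↦ (x : ℂ) ^ (n + 1) * (cexp (c * x) / c)) atTop (𝓝 0) := by
      simpa [mul_div_assoc'] using (tendsto_pow_mul_cexp_atTop hc (n + 1)).div_const c
    have h_parts := integral_Ioi_mul_deriv_eq_deriv_mul hderiv_pow hderiv_exp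
      (integrableOn_pow_mul_cexp_Ioi hc (n + 1))
      (IntegrableOn.congr_fun ((integrableOn_pow_mul_cexp_Ioi hc n).const_mul ((n + 1) / c))
        (fun x _ ↦ by simp only [Pi.mul_apply]; ring) measurableSet_Ioi)
      h_zero h_infty
    have h_const_mul : ∫ x : ℝ in Ioi 0, (n + 1 : ℂ) * (x : ℂ) ^ n * (cexp (c * x) / c)
        = (n + 1) / c * ∫ x : ℝ in Ioi 0, (x : ℂ) ^ n * cexp (c * x) := by
      rw [← integral_const_mul]
      congr 1 with x
      ring
    have hc0' : -c ≠ 0 := neg_ne_zero.2 hc0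
    rw [h_parts, h_const_mul, ih, Nat.factorial_succ]
    push_cast
    field_simp
    ring

lemma Complex.hasSum_pow_succ_div_factorial_succ (z : ℂ) :
    HasSum (fun k : ℕ ↦ z ^ (k + 1) / (k + 1)!) (cexp z - 1) := by
  have h := NormedSpace.expSeries_div_hasSum_exp z
  rw [← Complex.exp_eq_exp_ℂ, ← hasSum_nat_add_iff' 1] at h
  simpa using h

lemma summable_pow_div_factorial_mul_factorial_succ (t : ℝ) :
    Summable fun k : ℕ ↦ t ^ k / (k ! * (k + 1)! : ℝ) := by
  refine .of_norm_bounded (Real.summable_pow_div_factorial |t|) fun k ↦ ?_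
  rw [norm_div, norm_pow, Real.norm_eq_abs, Real.norm_of_nonneg (by positivity)]
  exact div_le_div_of_nonneg_left (by positivity) (by positivity)
    (le_mul_of_one_le_right (by positivity) (mod_cast (k + 1).factorial_pos))

lemma besselI1_two_mul_sqrt {t : ℝ} (ht : 0 ≤ t) :
    besselI1 (2 * √t) = √t * ∑' k : ℕ, t ^ k / (k ! * (k + 1)! : ℝ) := by
  have h : (2 * √t) ^ 2 / 4 = t := by rw [mul_pow, Real.sq_sqrt ht]; ring
  rw [besselI1, h]
  ring

noncomputable def besselDensity (α β x : ℝ) : ℝ :=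
  β * Real.exp (-α - β * x) * √(α / (β * x)) * besselI1 (2 * √(α * β * x))

/-- The Gamma(`k + 1`, `β`) density on `(0, ∞)`. -/
noncomputable def erlangDensity (β : ℝ) (k : ℕ) (x : ℝ) : ℝ :=
  β ^ (k + 1) * x ^ k * Real.exp (-β * x) / k !

lemma erlangDensity_nonneg {β x : ℝ} (hβ : 0 ≤ β) (hx : 0 ≤ x) (k : ℕ) :
    0 ≤ erlangDensity β k x := by
  unfold erlangDensity; positivity

lemma hasSum_besselDensity {α β x : ℝ} (hα : 0 ≤ α) (hβ : 0 < β) (hx : 0 < x) :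
    HasSum (fun k : ℕ ↦ Real.exp (-α) * α ^ (k + 1) / (k + 1)! * erlangDensity β k x)
      (besselDensity α β x) := by
  have ht : 0 ≤ α * β * x := by positivity
  have hsqrt : √(α / (β * x)) * √(α * β * x) = α := by
    rw [← Real.sqrt_mul (by positivity), show α / (β * x) * (α * β * x) = α ^ 2 by field_simp,
      Real.sqrt_sq hα]
  have hexp : Real.exp (-α - β * x) = Real.exp (-α) * Real.exp (-β * x) := by
    rw [← Real.exp_add]; ring_nf
  have hvalue : besselDensity α β x = α * β * Real.exp (-α) * Real.exp (-β * x) *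
      ∑' k : ℕ, (α * β * x) ^ k / (k ! * (k + 1)! : ℝ) := by
    rw [besselDensity, besselI1_two_mul_sqrt ht, hexp]
    linear_combination (β * Real.exp (-α) * Real.exp (-β * x) *
      ∑' k : ℕ, (α * β * x) ^ k / (k ! * (k + 1)! : ℝ)) * hsqrt
  have hterm : ∀ k : ℕ, Real.exp (-α) * α ^ (k + 1) / (k + 1)! * erlangDensity β k x
      = α * β * Real.exp (-α) * Real.exp (-β * x) * ((α * β * x) ^ k / (k ! * (k + 1)! : ℝ)) := by
    intro k
    simp only [erlangDensity, Nat.factorial_succ k]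
    push_cast
    field_simp
    ring
  rw [hvalue, funext hterm]
  exact (summable_pow_div_factorial_mul_factorial_succ (α * β * x)).hasSum.mul_left _

lemma besselDensity_nonneg {α β x : ℝ} (hα : 0 ≤ α) (hβ : 0 < β) (hx : 0 < x) :
    0 ≤ besselDensity α β x :=
  (hasSum_besselDensity hα hβ hx).nonneg fun k ↦
    mul_nonneg (by positivity) (erlangDensity_nonneg hβ.le hx.le k)

lemma aemeasurable_besselDensity {α β : ℝ} (hα : 0 ≤ α) (hβ : 0 < β) :
    AEMeasurable (besselDensity α β) (volume.restrict (Ioi 0)) := by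
  refine aemeasurable_of_tendsto_metrizable_ae atTop (f := fun n x ↦ ∑ k ∈ Finset.range n,
    Real.exp (-α) * α ^ (k + 1) / (k + 1)! * erlangDensity β k x) (fun n ↦ ?_) ?_
  · unfold erlangDensity; fun_prop
  · filter_upwards [ae_restrict_mem measurableSet_Ioi] with x hx
    exact (hasSum_besselDensity hα hβ hx).tendsto_sum_nat

lemma erlangDensity_mul_cexp (β : ℝ) (k : ℕ) (x : ℝ) (u : ℂ) :
    (erlangDensity β k x : ℂ) * cexp (u * x)
      = (β : ℂ) ^ (k + 1) / k ! * ((x : ℂ) ^ k * cexp ((u - β) * x)) := by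
  simp only [erlangDensity, sub_mul, Complex.exp_sub]
  push_cast
  rw [neg_mul, Complex.exp_neg]
  ring

lemma integrableOn_erlangDensity_mul_cexp {β : ℝ} {u : ℂ} (hu : u.re < β) (k : ℕ) :
    IntegrableOn (fun x : ℝ ↦ (erlangDensity β k x : ℂ) * cexp (u * x)) (Ioi 0) := by
  simp_rw [erlangDensity_mul_cexp]
  exact (integrableOn_pow_mul_cexp_Ioi (by simpa using hu) k).const_mul _

lemma integral_erlangDensity_mul_cexp {β : ℝ} {u : ℂ} (hu : u.re < β) (k : ℕ) :
    ∫ x : ℝ in Ioi 0, (erlangDensity β k x : ℂ) * cexp (u * x) = (β / (β - u)) ^ (k + 1) := by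
  have hk : (k ! : ℂ) ≠ 0 := mod_cast k.factorial_ne_zero
  have hβu : (β : ℂ) - u ≠ 0 := by
    rw [sub_ne_zero]; rintro rfl; simp at hu
  simp_rw [erlangDensity_mul_cexp, integral_const_mul,
    integral_pow_mul_cexp_Ioi (show (u - β).re < 0 by simpa using hu), neg_sub, div_pow]
  field_simp

lemma integral_erlangDensity_mul_exp {β s : ℝ} (hs : s < β) (k : ℕ) :
    ∫ x : ℝ in Ioi 0, erlangDensity β k x * Real.exp (s * x) = (β / (β - s)) ^ (k + 1) := by
  have h := integral_erlangDensity_mul_cexp (u := s) (by simpa using hs) k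
  rw [← Complex.ofReal_inj, ← integral_complex_ofReal]
  push_cast
  exact h

noncomputable def besselTerm (α β : ℝ) (u : ℂ) (k : ℕ) (x : ℝ) : ℂ :=
  (Real.exp (-α) * α ^ (k + 1) / (k + 1)! : ℝ) * ((erlangDensity β k x : ℂ) * cexp (u * x))

section BesselSeries

variable {α β : ℝ} {u : ℂ}

lemma norm_besselTerm (hα : 0 ≤ α) (hβ : 0 ≤ β) {x : ℝ} (hx : 0 ≤ x) (k : ℕ) :
    ‖besselTerm α β u k x‖
      = Real.exp (-α) * α ^ (k + 1) / (k + 1)! * (erlangDensity β k x * Real.exp (u.re * x)) := by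
  rw [besselTerm, norm_mul, norm_mul, norm_exp, Complex.norm_real, Complex.norm_real,
    Real.norm_of_nonneg (by positivity), Real.norm_of_nonneg (erlangDensity_nonneg hβ hx k)]
  simp

lemma integrableOn_besselTerm (hu : u.re < β) (k : ℕ) :
    IntegrableOn (besselTerm α β u k) (Ioi 0) :=
  (integrableOn_erlangDensity_mul_cexp hu k).const_mul _

lemma integral_besselTerm (hu : u.re < β) (k : ℕ) :
    ∫ x : ℝ in Ioi 0, besselTerm α β u k x
      = Real.exp (-α) * (α * (β / (β - u))) ^ (k + 1) / (k + 1)! := by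
  simp only [besselTerm, integral_const_mul, integral_erlangDensity_mul_cexp hu]
  push_cast
  ring

lemma summable_integral_norm_besselTerm (hα : 0 ≤ α) (hβ : 0 ≤ β) (hu : u.re < β) :
    Summable fun k ↦ ∫ x : ℝ in Ioi 0, ‖besselTerm α β u k x‖ := by
  have h_integral (k : ℕ) : ∫ x : ℝ in Ioi 0, ‖besselTerm α β u k x‖
      = Real.exp (-α) * ((α * (β / (β - u.re))) ^ (k + 1) / (k + 1)!) := by
    rw [setIntegral_congr_fun measurableSet_Ioi fun x hx ↦ norm_besselTerm hα hβ (le_of_lt hx) k,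
      integral_const_mul, integral_erlangDensity_mul_exp hu]
    ring
  simp_rw [h_integral]
  exact ((Real.summable_pow_div_factorial _).comp_injective (add_left_injective 1)).mul_left _

lemma hasSum_besselTerm (hα : 0 ≤ α) (hβ : 0 < β) {x : ℝ} (hx : 0 < x) :
    HasSum (fun k ↦ besselTerm α β u k x) (besselDensity α β x * cexp (u * x)) := by
  have h := (Complex.hasSum_ofReal.2 (hasSum_besselDensity hα hβ hx)).mul_right (cexp (u * x))
  simp only [Complex.ofReal_mul] at h
  simp only [besselTerm, ← mul_assoc]
  exact h

lemma integrableOn_besselDensity_mul_cexp (hα : 0 ≤ α) (hβ : 0 < β) (hu : u.re < β) :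
    IntegrableOn (fun x : ℝ ↦ (besselDensity α β x : ℂ) * cexp (u * x)) (Ioi 0) := by
  refine (integrable_tsum_of_summable_integral_norm (integrableOn_besselTerm hu)
    (summable_integral_norm_besselTerm hα hβ.le hu)).congr ?_
  filter_upwards [ae_restrict_mem measurableSet_Ioi] with x hx
  exact (hasSum_besselTerm hα hβ hx).tsum_eq

lemma integral_besselDensity_mul_cexp (hα : 0 ≤ α) (hβ : 0 < β) (hu : u.re < β) :
    ∫ x : ℝ in Ioi 0, (besselDensity α β x : ℂ) * cexp (u * x)
      = Real.exp (-α) * (cexp (α * (β / (β - u))) - 1) := calc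
  _ = ∫ x : ℝ in Ioi 0, ∑' k, besselTerm α β u k x :=
    setIntegral_congr_fun measurableSet_Ioi fun x hx ↦ (hasSum_besselTerm hα hβ hx).tsum_eq.symm
  _ = ∑' k, ∫ x : ℝ in Ioi 0, besselTerm α β u k x :=
    (integral_tsum_of_summable_integral_norm (integrableOn_besselTerm hu)
      (summable_integral_norm_besselTerm hα hβ.le hu)).symm
  _ = _ := by
    simp_rw [integral_besselTerm hu, mul_div_assoc]
    exact ((Complex.hasSum_pow_succ_div_factorial_succ _).mul_left _).tsum_eq

lemma toReal_ofReal_besselDensity_smul (hα : 0 ≤ α) (hβ : 0 < β) {x : ℝ} (hx : x ∈ Ioi 0)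
    (z : ℂ) : (ENNReal.ofReal (besselDensity α β x)).toReal • z = besselDensity α β x * z := by
  rw [ENNReal.toReal_ofReal (besselDensity_nonneg hα hβ hx), Complex.real_smul]

lemma integrable_cexp_mul_withDensity_besselDensity (hα : 0 ≤ α) (hβ : 0 < β) (hu : u.re < β) :
    Integrable (fun x : ℝ ↦ cexp (u * x))
      ((volume.restrict (Ioi 0)).withDensity fun x ↦ ENNReal.ofReal (besselDensity α β x)) :=
  (integrable_withDensity_iff_integrable_smul₀' (aemeasurable_besselDensity hα hβ).ennreal_ofReal
    (ae_of_all _ fun _ ↦ ofReal_lt_top)).2 <|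
      (integrableOn_besselDensity_mul_cexp hα hβ hu).congr_fun
        (fun _ hx ↦ (toReal_ofReal_besselDensity_smul hα hβ hx _).symm) measurableSet_Ioi

lemma integral_cexp_mul_withDensity_besselDensity (hα : 0 ≤ α) (hβ : 0 < β) (hu : u.re < β) :
    ∫ x : ℝ, cexp (u * x)
        ∂(volume.restrict (Ioi 0)).withDensity (fun x ↦ ENNReal.ofReal (besselDensity α β x))
      = Real.exp (-α) * (cexp (α * (β / (β - u))) - 1) := by
  rw [integral_withDensity_eq_integral_toReal_smul₀
      (aemeasurable_besselDensity hα hβ).ennreal_ofReal (ae_of_all _ fun _ ↦ ofReal_lt_top),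
    setIntegral_congr_fun measurableSet_Ioi fun x hx ↦ toReal_ofReal_besselDensity_smul hα hβ hx _,
    integral_besselDensity_mul_cexp hα hβ hu]

end BesselSeries

lemma besselMeasure_eq (α β : ℝ) : besselMeasure α β
    = ENNReal.ofReal (Real.exp (-α)) • Measure.dirac 0 +
      (volume.restrict (Ioi 0)).withDensity fun x ↦ ENNReal.ofReal (besselDensity α β x) :=
  rfl

/-- For `Re u ≤ 0`, the transform of the Bessel distribution is
`∫ e^{ux} μ_{α,β}(dx) = exp(αu/(β-u))`. -/
theorem bessel_transform (α β : ℝ) (hα : 0 < α) (hβ : 0 < β)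
    (u : ℂ) (hu : u.re ≤ 0) :
    ∫ x : ℝ, Complex.exp (u * x) ∂(besselMeasure α β) =
      Complex.exp ((α : ℂ) * u / ((β : ℂ) - u)) := by
  have hu' : u.re < β := hu.trans_lt hβ
  have hβu : (β : ℂ) - u ≠ 0 := by
    rw [sub_ne_zero]; rintro rfl; simp at hu'
  have h_atom : Integrable (fun x : ℝ ↦ cexp (u * x))
      (ENNReal.ofReal (Real.exp (-α)) • Measure.dirac 0) :=
    (integrable_dirac (by simp)).smul_measure ofReal_ne_top
  rw [besselMeasure_eq, integral_add_measure h_atom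
      (integrable_cexp_mul_withDensity_besselDensity hα.le hβ hu'),
    integral_smul_measure, integral_dirac, integral_cexp_mul_withDensity_besselDensity hα.le hβ hu',
    ENNReal.toReal_ofReal (Real.exp_nonneg _), Complex.real_smul,
    show (α : ℂ) * u / (β - u) = -α + α * (β / (β - u)) by field_simp; ring, Complex.exp_add]
  push_cast [mul_zero, Complex.exp_zero]
  ring
end

section
/- Assume ∫_{(0,1)} ξ ln(1/ξ) ν(dξ) < ∞ and ∫_{(0,∞)} (ξ ∧ 1) ν(dξ) < ∞. Then for every t > 0, λ := ∫₀^t ∫_{(0,∞)} (1 - exp(-2aξ/(σ²(e^{as}-1)))) ν(dξ) ds < ∞. -/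
/-!
Since `1 - e^{-x} ≤ min x 1` and `e^{as} - 1 ≥ as`, the integrand is at most `min (cξ/s) 1` with
`c = 2/σ²`. Integrating first in `s` (Tonelli applies because `ν` restricted to `(0,∞)` has a
finite integral of the positive function `ξ ∧ 1`, hence is s-finite), the integral of
`min (cξ/s) 1` over `(0,t)` is at most `t`, and for `ξ < 1` at most `cξ (1 + log⁺ (t/(cξ)))`,
which is `O(ξ + ξ log(1/ξ))`. The two moment conditions on `ν` then bound the `ξ`-integral.
-/

open MeasureTheory ENNReal Set

lemma sFinite_of_lintegral_ne_top {α : Type*} [MeasurableSpace α] {μ : Measure α}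
    {f : α → ℝ≥0∞} (hf : AEMeasurable f μ) (hf_ne_zero : ∀ᵐ x ∂μ, f x ≠ 0)
    (hf_fin : ∫⁻ x, f x ∂μ ≠ ∞) : SFinite μ :=
  have := isFiniteMeasure_withDensity hf_fin
  sFinite_of_absolutelyContinuous (withDensity_absolutelyContinuous' hf hf_ne_zero)

lemma Real.one_sub_exp_neg_le_min (x : ℝ) : 1 - Real.exp (-x) ≤ min x 1 :=
  le_min (by linarith [Real.one_sub_le_exp_neg x]) (by linarith [Real.exp_pos (-x)])

lemma one_sub_exp_le_min_div {a σ s ξ : ℝ} (ha : 0 < a) (hσ : σ ≠ 0) (hs : 0 < s)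
    (hξ : 0 ≤ ξ) :
    1 - Real.exp (-(2 * a * ξ) / (σ ^ 2 * (Real.exp (a * s) - 1))) ≤
      min (2 / σ ^ 2 * ξ / s) 1 := by
  have has : a * s ≤ Real.exp (a * s) - 1 := by linarith [Real.add_one_le_exp (a * s)]
  have hle : 2 * a * ξ / (σ ^ 2 * (Real.exp (a * s) - 1)) ≤ 2 / σ ^ 2 * ξ / s :=
    calc 2 * a * ξ / (σ ^ 2 * (Real.exp (a * s) - 1))
        ≤ 2 * a * ξ / (σ ^ 2 * (a * s)) := by gcongr
      _ = 2 / σ ^ 2 * ξ / s := by field_simp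
  rw [neg_div]
  exact (Real.one_sub_exp_neg_le_min _).trans (min_le_min_right 1 hle)

lemma setLIntegral_Ioo_min_div_one_le {b : ℝ} (hb : 0 < b) (t : ℝ) :
    ∫⁻ s in Ioo 0 t, ENNReal.ofReal (min (b / s) 1) ≤
      ENNReal.ofReal (b * (1 + Real.log (max t b / b))) := by
  set T := max t b
  have hbT : b ≤ T := le_max_right t b
  have hnear : ∫⁻ s in Ioc 0 b, ENNReal.ofReal (min (b / s) 1) ≤ ENNReal.ofReal b :=
    calc ∫⁻ s in Ioc 0 b, ENNReal.ofReal (min (b / s) 1)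
        ≤ ∫⁻ _ in Ioc 0 b, 1 := lintegral_mono fun s => ofReal_le_one.2 (min_le_right _ _)
      _ = ENNReal.ofReal b := by simp
  have hinv_int : IntegrableOn (fun s => b * s⁻¹) (Ioc b T) :=
    ((continuousOn_const.mul (continuousOn_inv₀.mono fun s hs => (hb.trans_le hs.1).ne')
      ).integrableOn_Icc).mono_set Ioc_subset_Icc_self
  have hfar : ∫⁻ s in Ioc b T, ENNReal.ofReal (min (b / s) 1) ≤
      ENNReal.ofReal (b * Real.log (T / b)) :=
    calc ∫⁻ s in Ioc b T, ENNReal.ofReal (min (b / s) 1)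
        ≤ ∫⁻ s in Ioc b T, ENNReal.ofReal (b * s⁻¹) :=
          lintegral_mono fun s => ofReal_le_ofReal ((min_le_left _ _).trans_eq (div_eq_mul_inv _ _))
      _ = ENNReal.ofReal (b * Real.log (T / b)) := by
        rw [← ofReal_integral_eq_lintegral_ofReal hinv_int, ← intervalIntegral.integral_of_le hbT,
          intervalIntegral.integral_const_mul, integral_inv_of_pos hb (hb.trans_le hbT)]
        exact (ae_restrict_iff' measurableSet_Ioc).2 (ae_of_all _ fun s hs =>
          mul_nonneg hb.le (inv_nonneg.2 (hb.le.trans hs.1.le)))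
  calc ∫⁻ s in Ioo 0 t, ENNReal.ofReal (min (b / s) 1)
      ≤ ∫⁻ s in Ioc 0 b ∪ Ioc b T, ENNReal.ofReal (min (b / s) 1) := by
        rw [Ioc_union_Ioc_eq_Ioc hb.le hbT]
        exact lintegral_mono_set
          (Ioo_subset_Ioc_self.trans (Ioc_subset_Ioc_right (le_max_left t b)))
    _ ≤ ENNReal.ofReal b + ENNReal.ofReal (b * Real.log (T / b)) :=
        (lintegral_union_le _ _ _).trans (add_le_add hnear hfar)
    _ = ENNReal.ofReal (b * (1 + Real.log (T / b))) := by
        rw [← ofReal_add hb.le (mul_nonneg hb.le (Real.log_nonneg ((one_le_div hb).2 hbT))),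
          mul_one_add]

-- No indicator of `(0,1)` is needed: `ENNReal.ofReal (ξ * log (1/ξ)) = 0` for `ξ ≥ 1`.
lemma setLIntegral_Ioo_min_mul_div_one_le {c t ξ : ℝ} (hc : 0 < c) (ht : 0 < t) (hξ : 0 < ξ) :
    ∫⁻ s in Ioo 0 t, ENNReal.ofReal (min (c * ξ / s) 1) ≤
      ENNReal.ofReal (t + c * (1 + |Real.log (t / c)|)) * ENNReal.ofReal (min ξ 1) +
        ENNReal.ofReal c * ENNReal.ofReal (ξ * Real.log (1 / ξ)) := by
  have hC : t ≤ t + c * (1 + |Real.log (t / c)|) := le_add_of_nonneg_right (by positivity)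
  rcases le_or_gt 1 ξ with hξ1 | hξ1
  · calc ∫⁻ s in Ioo 0 t, ENNReal.ofReal (min (c * ξ / s) 1)
        ≤ ∫⁻ _ in Ioo 0 t, 1 := lintegral_mono fun s => ofReal_le_one.2 (min_le_right _ _)
      _ = ENNReal.ofReal t := by simp
      _ ≤ _ := by
        rw [min_eq_right hξ1, ofReal_one, mul_one]
        exact le_add_right (ofReal_le_ofReal hC)
  · have hb : 0 < c * ξ := mul_pos hc hξ
    have hlog : Real.log (max t (c * ξ) / (c * ξ)) ≤ |Real.log (t / c)| + Real.log (1 / ξ) := by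
      have hlogξ : 0 < Real.log (1 / ξ) := Real.log_pos ((one_lt_div hξ).2 hξ1)
      rcases le_total t (c * ξ) with htb | hbt
      · rw [max_eq_right htb, div_self hb.ne', Real.log_one]
        positivity
      · rw [max_eq_left hbt, show t / (c * ξ) = t / c * (1 / ξ) by field_simp,
          Real.log_mul (div_pos ht hc).ne' (one_div_pos.2 hξ).ne']
        exact add_le_add_left (le_abs_self _) _
    calc ∫⁻ s in Ioo 0 t, ENNReal.ofReal (min (c * ξ / s) 1)
        ≤ ENNReal.ofReal (c * ξ * (1 + Real.log (max t (c * ξ) / (c * ξ)))) :=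
          setLIntegral_Ioo_min_div_one_le hb t
      _ ≤ ENNReal.ofReal (c * (1 + |Real.log (t / c)|) * ξ + c * (ξ * Real.log (1 / ξ))) := by
          apply ofReal_le_ofReal
          linarith [mul_le_mul_of_nonneg_left hlog hb.le]
      _ ≤ _ := by
          rw [min_eq_left hξ1.le, ← ofReal_mul (ht.le.trans hC), ← ofReal_mul hc.le]
          refine ofReal_add_le.trans (add_le_add_left (ofReal_le_ofReal ?_) _)
          linarith [mul_pos ht hξ]

lemma setLIntegral_Ioi_ofReal_mul_log_inv (ν : Measure ℝ) :
    ∫⁻ ξ in Ioi 0, ENNReal.ofReal (ξ * Real.log (1 / ξ)) ∂ν =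
      ∫⁻ ξ in Ioo 0 1, ENNReal.ofReal (ξ * Real.log (1 / ξ)) ∂ν := by
  rw [← Ioo_union_Ici_eq_Ioi zero_lt_one,
    lintegral_union measurableSet_Ici ((Iio_disjoint_Ici le_rfl).mono_left Ioo_subset_Iio_self),
    setLIntegral_eq_zero measurableSet_Ici, add_zero]
  intro ξ (hξ : 1 ≤ ξ)
  exact ofReal_eq_zero.2 (mul_nonpos_of_nonneg_of_nonpos (zero_le_one.trans hξ)
    (Real.log_nonpos (by positivity) ((div_le_one (zero_lt_one.trans_le hξ)).2 hξ)))

/-- If `∫_{(0,1)} ξ ln(1/ξ) ν(dξ) < ∞` and `∫_{(0,∞)} (ξ ∧ 1) ν(dξ) < ∞`, then for every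
`t > 0` the quantity `λ = ∫₀^t ∫_{(0,∞)} (1 - exp(-2aξ/(σ²(e^{as}-1)))) ν(dξ) ds` is finite. -/
theorem lambda_finite (a σ : ℝ) (ha : 0 < a) (hσ : 0 < σ)
    (ν : Measure ℝ)
    (hν1 : ∫⁻ ξ in Set.Ioo (0 : ℝ) 1, ENNReal.ofReal (ξ * Real.log (1 / ξ)) ∂ν < ⊤)
    (hν2 : ∫⁻ ξ in Set.Ioi (0 : ℝ), ENNReal.ofReal (min ξ 1) ∂ν < ⊤)
    (t : ℝ) (ht : 0 < t) :
    ∫⁻ s in Set.Ioo (0 : ℝ) t, ∫⁻ ξ in Set.Ioi (0 : ℝ),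
      ENNReal.ofReal
        (1 - Real.exp (-(2 * a * ξ) / (σ ^ 2 * (Real.exp (a * s) - 1)))) ∂ν < ⊤ := by
  set c : ℝ := 2 / σ ^ 2
  have hc : 0 < c := by positivity
  have : SFinite (ν.restrict (Ioi 0)) :=
    sFinite_of_lintegral_ne_top (by fun_prop)
      ((ae_restrict_iff' measurableSet_Ioi).2 (ae_of_all _ fun ξ (hξ : 0 < ξ) => by simp [hξ]))
      hν2.ne
  calc _ ≤ ∫⁻ s in Ioo 0 t, ∫⁻ ξ in Ioi 0, ENNReal.ofReal (min (c * ξ / s) 1) ∂ν :=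
        setLIntegral_mono' measurableSet_Ioo fun s hs => setLIntegral_mono' measurableSet_Ioi
          fun ξ hξ => ofReal_le_ofReal (one_sub_exp_le_min_div ha hσ.ne' hs.1 (le_of_lt hξ))
    _ = ∫⁻ ξ in Ioi 0, (∫⁻ s in Ioo 0 t, ENNReal.ofReal (min (c * ξ / s) 1)) ∂ν :=
        lintegral_lintegral_swap (Measurable.aemeasurable (by fun_prop))
    _ ≤ ∫⁻ ξ in Ioi 0, (ENNReal.ofReal (t + c * (1 + |Real.log (t / c)|)) *
          ENNReal.ofReal (min ξ 1) + ENNReal.ofReal c * ENNReal.ofReal (ξ * Real.log (1 / ξ))) ∂ν :=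
        setLIntegral_mono' measurableSet_Ioi fun ξ hξ =>
          setLIntegral_Ioo_min_mul_div_one_le hc ht hξ
    _ = ENNReal.ofReal (t + c * (1 + |Real.log (t / c)|)) *
          ∫⁻ ξ in Ioi 0, ENNReal.ofReal (min ξ 1) ∂ν +
        ENNReal.ofReal c * ∫⁻ ξ in Ioo 0 1, ENNReal.ofReal (ξ * Real.log (1 / ξ)) ∂ν := by
        rw [lintegral_add_left (by fun_prop), lintegral_const_mul' _ _ ofReal_ne_top,
          lintegral_const_mul' _ _ ofReal_ne_top, setLIntegral_Ioi_ofReal_mul_log_inv]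
    _ < ⊤ := by finiteness
end

section
/- For fixed δ > 0 and a, σ > 0, the function M(ξ) := ∫_{ξ/δ}^∞ (1 - e^{-y}) · 2ξ/(2aξy + σ²y²) dy satisfies: there exists a constant c > 0 with M(ξ) ≤ c ξ ln(1/ξ) for all sufficiently small ξ > 0, and M(ξ) ≤ 2δ/σ² for all ξ > 0. -/
open MeasureTheory

section MAux
open MeasureTheory Set Real

section Aux

variable {a σ ξ : ℝ}

/-- pointwise facts about the integrand -/
lemma f_nonneg (ha : 0 < a) (hσ : 0 < σ) (hξ : 0 < ξ) {y : ℝ} (hy : 0 < y) :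
    0 ≤ (1 - Real.exp (-y)) * (2 * ξ / (2 * a * ξ * y + σ ^ 2 * y ^ 2)) := by
  apply mul_nonneg
  · have : Real.exp (-y) ≤ 1 := by
      rw [Real.exp_le_one_iff]; linarith
    linarith
  · positivity

lemma f_le_inv_sq (ha : 0 < a) (hσ : 0 < σ) (hξ : 0 < ξ) {y : ℝ} (hy : 0 < y) :
    (1 - Real.exp (-y)) * (2 * ξ / (2 * a * ξ * y + σ ^ 2 * y ^ 2))
      ≤ (2 * ξ / σ ^ 2) * (y ^ 2)⁻¹ := by
  have h1 : 1 - Real.exp (-y) ≤ 1 := by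
    have := Real.exp_pos (-y); linarith
  have h2 : 2 * ξ / (2 * a * ξ * y + σ ^ 2 * y ^ 2) ≤ 2 * ξ / (σ ^ 2 * y ^ 2) := by
    apply div_le_div_of_nonneg_left (by positivity) (by positivity)
    have : 0 < 2 * a * ξ * y := by positivity
    linarith
  calc (1 - Real.exp (-y)) * (2 * ξ / (2 * a * ξ * y + σ ^ 2 * y ^ 2))
      ≤ 1 * (2 * ξ / (σ ^ 2 * y ^ 2)) := by
        apply mul_le_mul h1 h2 (by positivity) one_pos.le
    _ = (2 * ξ / σ ^ 2) * (y ^ 2)⁻¹ := by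
        rw [one_mul, div_mul_eq_div_div_swap, div_div]
        ring_nf

lemma f_le_inv (ha : 0 < a) (hσ : 0 < σ) (hξ : 0 < ξ) {y : ℝ} (hy : 0 < y) :
    (1 - Real.exp (-y)) * (2 * ξ / (2 * a * ξ * y + σ ^ 2 * y ^ 2))
      ≤ (2 * ξ / σ ^ 2) * y⁻¹ := by
  have h1 : 1 - Real.exp (-y) ≤ y := by
    have := Real.add_one_le_exp (-y); linarith
  have h2 : 2 * ξ / (2 * a * ξ * y + σ ^ 2 * y ^ 2) ≤ 2 * ξ / (σ ^ 2 * y ^ 2) := by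
    apply div_le_div_of_nonneg_left (by positivity) (by positivity)
    have : 0 < 2 * a * ξ * y := by positivity
    linarith
  have h0 : 0 ≤ 1 - Real.exp (-y) := by
    have : Real.exp (-y) ≤ 1 := by rw [Real.exp_le_one_iff]; linarith
    linarith
  calc (1 - Real.exp (-y)) * (2 * ξ / (2 * a * ξ * y + σ ^ 2 * y ^ 2))
      ≤ y * (2 * ξ / (σ ^ 2 * y ^ 2)) := by
        apply mul_le_mul h1 h2 (by positivity) hy.le
    _ = (2 * ξ / σ ^ 2) * y⁻¹ := by field_simp

lemma inv_sq_integrableOn {c : ℝ} (hc : 0 < c) :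
    IntegrableOn (fun y : ℝ => (y ^ 2)⁻¹) (Ioi c) := by
  have := integrableOn_Ioi_rpow_of_lt (a := (-2)) (by norm_num) hc
  apply this.congr_fun ?_ measurableSet_Ioi
  intro x hx
  show x ^ ((-2):ℝ) = (x ^ 2)⁻¹
  rw [show (-2:ℝ) = -(2:ℝ) by norm_num, Real.rpow_neg (le_of_lt (hc.trans hx)), Real.rpow_two]

lemma inv_sq_integral {c : ℝ} (hc : 0 < c) :
    ∫ y in Ioi c, (y ^ 2)⁻¹ = c⁻¹ := by
  have h := integral_Ioi_rpow_of_lt (a := (-2)) (by norm_num) hc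
  have : (∫ y in Ioi c, (y ^ 2)⁻¹) = ∫ t : ℝ in Ioi c, t ^ (-2 : ℝ) := by
    apply setIntegral_congr_fun measurableSet_Ioi
    intro x hx
    show (x ^ 2)⁻¹ = x ^ ((-2):ℝ)
    rw [show (-2:ℝ) = -(2:ℝ) by norm_num, Real.rpow_neg (le_of_lt (hc.trans hx)), Real.rpow_two]
  rw [this, h, show (-2:ℝ) + 1 = -1 by norm_num, Real.rpow_neg_one]
  ring

end Aux

section Main

variable {a σ ξ : ℝ}

lemma f_integrableOn (ha : 0 < a) (hσ : 0 < σ) (hξ : 0 < ξ) {c : ℝ} (hc : 0 < c) :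
    IntegrableOn (fun y => (1 - Real.exp (-y)) * (2 * ξ / (2 * a * ξ * y + σ ^ 2 * y ^ 2)))
      (Ioi c) := by
  apply Integrable.mono' ((inv_sq_integrableOn hc).const_mul (2 * ξ / σ ^ 2))
  · apply ContinuousOn.aestronglyMeasurable ?_ measurableSet_Ioi
    apply ContinuousOn.mul
    · exact (continuous_const.sub (Real.continuous_exp.comp continuous_neg)).continuousOn
    · apply ContinuousOn.div continuousOn_const
      · fun_prop
      · intro y hy
        have hy0 : 0 < y := hc.trans hy
        positivity
  · rw [ae_restrict_iff' measurableSet_Ioi]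
    filter_upwards with y hy
    have hy0 : 0 < y := hc.trans hy
    rw [Real.norm_eq_abs, abs_of_nonneg (f_nonneg ha hσ hξ hy0)]
    exact f_le_inv_sq ha hσ hξ hy0

lemma M_le (ha : 0 < a) (hσ : 0 < σ) (hξ : 0 < ξ) {c : ℝ} (hc : 0 < c) :
    (∫ y in Ioi c, (1 - Real.exp (-y)) * (2 * ξ / (2 * a * ξ * y + σ ^ 2 * y ^ 2)))
      ≤ 2 * ξ / σ ^ 2 * c⁻¹ := by
  have h1 : (∫ y in Ioi c, (1 - Real.exp (-y)) * (2 * ξ / (2 * a * ξ * y + σ ^ 2 * y ^ 2)))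
      ≤ ∫ y in Ioi c, 2 * ξ / σ ^ 2 * (y ^ 2)⁻¹ := by
    apply setIntegral_mono_on (f_integrableOn ha hσ hξ hc)
      ((inv_sq_integrableOn hc).const_mul _) measurableSet_Ioi
    intro y hy
    exact f_le_inv_sq ha hσ hξ (hc.trans hy)
  calc _ ≤ ∫ y in Ioi c, 2 * ξ / σ ^ 2 * (y ^ 2)⁻¹ := h1
    _ = 2 * ξ / σ ^ 2 * c⁻¹ := by rw [MeasureTheory.integral_const_mul, inv_sq_integral hc]

end Main

end MAux

open Set Real in
/-- For `M(ξ) = ∫_{ξ/δ}^∞ (1 - e^{-y}) 2ξ/(2aξy + σ²y²) dy`, there is `c > 0` with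
`M(ξ) ≤ c ξ ln(1/ξ)` for all sufficiently small `ξ > 0`, and `M(ξ) ≤ 2δ/σ²` for all `ξ > 0`. -/
theorem M_bounds (a σ δ : ℝ) (ha : 0 < a) (hσ : 0 < σ) (hδ : 0 < δ)
    (M : ℝ → ℝ)
    (hM : ∀ ξ : ℝ, 0 < ξ →
      M ξ = ∫ y in Set.Ioi (ξ / δ),
        (1 - Real.exp (-y)) * (2 * ξ / (2 * a * ξ * y + σ ^ 2 * y ^ 2))) :
    (∃ c > (0 : ℝ), ∃ ξ₀ > (0 : ℝ), ∀ ξ : ℝ, 0 < ξ → ξ < ξ₀ →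
        M ξ ≤ c * (ξ * Real.log (1 / ξ))) ∧
    (∀ ξ : ℝ, 0 < ξ → M ξ ≤ 2 * δ / σ ^ 2) := by
  constructor
  · refine ⟨4 / σ ^ 2, by positivity,
      min δ (Real.exp (-(1 + Real.log δ))), lt_min hδ (Real.exp_pos _), ?_⟩
    intro ξ hξ hξ₀
    have hξδ : ξ < δ := hξ₀.trans_le (min_le_left _ _)
    have hlog : Real.log δ + 1 + Real.log ξ < 0 := by
      have := Real.log_lt_log hξ (hξ₀.trans_le (min_le_right _ _))
      rw [Real.log_exp] at this
      linarith
    set c := ξ / δ with hc_def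
    have hc : 0 < c := by positivity
    have hc1 : c < 1 := (div_lt_one hδ).mpr hξδ
    have hInt : IntegrableOn
        (fun y => (1 - Real.exp (-y)) * (2 * ξ / (2 * a * ξ * y + σ ^ 2 * y ^ 2)))
        (Ioi c) := f_integrableOn ha hσ hξ hc
    have hsplit : M ξ = (∫ y in Ioc c 1,
          (1 - Real.exp (-y)) * (2 * ξ / (2 * a * ξ * y + σ ^ 2 * y ^ 2)))
        + ∫ y in Ioi 1, (1 - Real.exp (-y)) * (2 * ξ / (2 * a * ξ * y + σ ^ 2 * y ^ 2)) := by
      rw [hM ξ hξ, ← setIntegral_union (Ioc_disjoint_Ioi le_rfl) measurableSet_Ioi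
        (hInt.mono_set Ioc_subset_Ioi_self) (hInt.mono_set (Ioi_subset_Ioi hc1.le)),
        Ioc_union_Ioi_eq_Ioi hc1.le]
    -- bound the first piece
    have hint_inv : IntegrableOn (fun y : ℝ => 2 * ξ / σ ^ 2 * y⁻¹) (Ioc c 1) := by
      have : IntervalIntegrable (fun y : ℝ => y⁻¹) volume c 1 := by
        apply intervalIntegral.intervalIntegrable_inv
        · intro x hx
          rcases hx with ⟨h1, _⟩
          have : 0 < x := lt_of_lt_of_le (lt_min hc zero_lt_one) h1
          exact this.ne'
        · exact continuousOn_id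
      exact ((intervalIntegrable_iff_integrableOn_Ioc_of_le hc1.le).mp this).const_mul _
    have hb1 : (∫ y in Ioc c 1,
          (1 - Real.exp (-y)) * (2 * ξ / (2 * a * ξ * y + σ ^ 2 * y ^ 2)))
        ≤ 2 * ξ / σ ^ 2 * (Real.log δ - Real.log ξ) := by
      calc (∫ y in Ioc c 1,
            (1 - Real.exp (-y)) * (2 * ξ / (2 * a * ξ * y + σ ^ 2 * y ^ 2)))
          ≤ ∫ y in Ioc c 1, 2 * ξ / σ ^ 2 * y⁻¹ := by
            apply setIntegral_mono_on (hInt.mono_set Ioc_subset_Ioi_self) hint_inv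
              measurableSet_Ioc
            intro y hy
            exact f_le_inv ha hσ hξ (hc.trans hy.1)
        _ = 2 * ξ / σ ^ 2 * ∫ y in Ioc c 1, y⁻¹ := MeasureTheory.integral_const_mul _ _
        _ = 2 * ξ / σ ^ 2 * (Real.log δ - Real.log ξ) := by
            rw [← intervalIntegral.integral_of_le hc1.le, integral_inv_of_pos hc zero_lt_one,
              hc_def, one_div, inv_div, Real.log_div hδ.ne' hξ.ne']
    have hb2 : (∫ y in Ioi 1,
          (1 - Real.exp (-y)) * (2 * ξ / (2 * a * ξ * y + σ ^ 2 * y ^ 2)))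
        ≤ 2 * ξ / σ ^ 2 := by
      have := M_le ha hσ hξ (zero_lt_one (α := ℝ))
      simpa using this
    rw [hsplit, Real.log_div one_ne_zero hξ.ne', Real.log_one]
    have hσ2 : (0:ℝ) < σ ^ 2 := by positivity
    have key : 2 * ξ * (Real.log δ - Real.log ξ) + 2 * ξ ≤ 4 * (ξ * (0 - Real.log ξ)) := by
      nlinarith
    calc _ ≤ 2 * ξ / σ ^ 2 * (Real.log δ - Real.log ξ) + 2 * ξ / σ ^ 2 := add_le_add hb1 hb2
      _ = (2 * ξ * (Real.log δ - Real.log ξ) + 2 * ξ) / σ ^ 2 := by ring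
      _ ≤ (4 * (ξ * (0 - Real.log ξ))) / σ ^ 2 := by gcongr
      _ = 4 / σ ^ 2 * (ξ * (0 - Real.log ξ)) := by ring
  · intro ξ hξ
    have hc : 0 < ξ / δ := by positivity
    rw [hM ξ hξ]
    calc _ ≤ 2 * ξ / σ ^ 2 * (ξ / δ)⁻¹ := M_le ha hσ hξ hc
      _ = 2 * δ / σ ^ 2 := by field_simp
end

section
/- For Re u ≤ 0, the derivative with respect to u of e^{ξuе^{-as}/(1-(σ²/(2a))(1-e^{-as})u)} is bounded in absolute value by ξ e^{-as}; consequently, if ∫_{(0,∞)} ξ ν(dξ) < ∞, the function Δ(u) = ∫₀^t ∫_{(0,∞)} (e^{ξue^{-as}/(1-(σ²/(2a))(1-e^{-as})u)} - 1) ν(dξ) ds is differentiable at u = 0 (from the left along the reals) with Δ'(0) = ((1-e^{-at})/a) ∫_{(0,∞)} ξ ν(dξ). -/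
/-!
For `u ≤ 0`, `s ≥ 0` and `ξ > 0` the exponent is `≤ 0` and the denominator `1 - C u` is `≥ 1`, so
the `u`-derivative `exp(⋯) · ξ e^{-as} / (1 - C u)²` of the integrand is bounded by `ξ e^{-as}`.
By the mean value theorem the difference quotients at `0` are then dominated by `ξ e^{-as}`, which
is integrable for `ds ⊗ ν` on `(0, t) × (0, ∞)` since `∫ ξ dν < ∞`. Dominated convergence on this
product measure and Fubini give `Δ'(0) = ∫∫ ξ e^{-as} = ((1 - e^{-at}) / a) ∫ ξ dν`.
-/

open MeasureTheory Filter Set Real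
open scoped ENNReal

lemma hasDerivAt_exp_div_one_sub_mul (ξ E C u : ℝ) (hu : 1 - C * u ≠ 0) :
    HasDerivAt (fun v ↦ exp (ξ * v * E / (1 - C * v)))
      (exp (ξ * u * E / (1 - C * u)) * (ξ * E / (1 - C * u) ^ 2)) u := by
  have hnum : HasDerivAt (fun v ↦ ξ * v * E) (ξ * E) u := by
    simpa using ((hasDerivAt_id u).const_mul ξ).mul_const E
  have hden : HasDerivAt (fun v ↦ 1 - C * v) (-C) u := by
    simpa using ((hasDerivAt_id u).const_mul C).const_sub 1
  have h := (hnum.div hden hu).exp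
  rwa [show ξ * E * (1 - C * u) - ξ * u * E * -C = ξ * E by ring] at h

lemma hasDerivAt_exp_div_one_sub_mul_zero (ξ E C : ℝ) :
    HasDerivAt (fun v ↦ exp (ξ * v * E / (1 - C * v))) (ξ * E) 0 := by
  simpa using hasDerivAt_exp_div_one_sub_mul ξ E C 0 (by simp)

lemma abs_exp_div_one_sub_mul_deriv_le {ξ E C u : ℝ} (hξ : 0 ≤ ξ) (hE : 0 ≤ E) (hC : 0 ≤ C)
    (hu : u ≤ 0) :
    |exp (ξ * u * E / (1 - C * u)) * (ξ * E / (1 - C * u) ^ 2)| ≤ ξ * E := by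
  have hden : 1 ≤ 1 - C * u := by nlinarith
  have hexp : exp (ξ * u * E / (1 - C * u)) ≤ 1 :=
    exp_le_one_iff.mpr
      (div_nonpos_of_nonpos_of_nonneg (by nlinarith [mul_nonneg hξ hE]) (by linarith))
  have hfrac : ξ * E / (1 - C * u) ^ 2 ≤ ξ * E :=
    div_le_self (by positivity) (by nlinarith)
  rw [abs_of_nonneg (by positivity)]
  calc _ ≤ 1 * (ξ * E) := by gcongr
    _ = ξ * E := one_mul _

lemma abs_exp_div_one_sub_mul_sub_one_le {ξ E C u : ℝ} (hξ : 0 ≤ ξ) (hE : 0 ≤ E) (hC : 0 ≤ C)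
    (hu : u ≤ 0) :
    |exp (ξ * u * E / (1 - C * u)) - 1| ≤ ξ * E * |u| := by
  have hderiv : ∀ v ∈ Iic (0 : ℝ), HasDerivWithinAt (fun v ↦ exp (ξ * v * E / (1 - C * v)))
      (exp (ξ * v * E / (1 - C * v)) * (ξ * E / (1 - C * v) ^ 2)) (Iic 0) v :=
    fun v hv ↦
      (hasDerivAt_exp_div_one_sub_mul ξ E C v (by nlinarith [mem_Iic.mp hv])).hasDerivWithinAt
  simpa using (convex_Iic (0 : ℝ)).norm_image_sub_le_of_norm_hasDerivWithin_le hderiv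
    (fun v hv ↦ abs_exp_div_one_sub_mul_deriv_le hξ hE hC hv) self_mem_Iic hu

lemma sigmaFinite_of_lintegral_lt_top {α : Type*} [MeasurableSpace α] {μ : Measure α}
    {f : α → ℝ≥0∞} (hf : AEMeasurable f μ) (hf₀ : ∀ᵐ x ∂μ, f x ≠ 0)
    (hfin : ∫⁻ x, f x ∂μ < ∞) : SigmaFinite μ := by
  -- `μ` is recovered from the finite measure `f • μ` by the a.e. finite density `f⁻¹`.
  have : IsFiniteMeasure (μ.withDensity f) := isFiniteMeasure_withDensity hfin.ne
  have hinv : ∀ᵐ x ∂μ.withDensity f, (f x)⁻¹ ≠ ∞ :=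
    (withDensity_absolutelyContinuous μ f).ae_le (hf₀.mono fun x hx ↦ by simpa using hx)
  have := SigmaFinite.withDensity_of_ne_top (f := fun x ↦ (f x)⁻¹) hinv
  rwa [withDensity_inv_same₀ hf hf₀ ((ae_lt_top' hf hfin.ne).mono fun _ h ↦ h.ne)] at this

lemma hasDerivWithinAt_integral_of_abs_sub_le {α : Type*} [MeasurableSpace α] {μ : Measure α}
    {g : ℝ → α → ℝ} {g' b : α → ℝ} {s : Set ℝ} {x : ℝ}
    (hg : ∀ u ∈ s, Integrable (g u) μ) (hgx : Integrable (g x) μ) (hb : Integrable b μ)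
    (hbound : ∀ u ∈ s, ∀ᵐ p ∂μ, |g u p - g x p| ≤ b p * |u - x|)
    (hderiv : ∀ᵐ p ∂μ, HasDerivWithinAt (g · p) (g' p) s x) :
    HasDerivWithinAt (fun u ↦ ∫ p, g u p ∂μ) (∫ p, g' p ∂μ) s x := by
  rw [hasDerivWithinAt_iff_tendsto_slope]
  have hslope : ∀ u ∈ s, slope (fun u ↦ ∫ p, g u p ∂μ) x u = ∫ p, slope (g · p) x u ∂μ := by
    intro u hu
    simp only [slope_def_field]
    rw [← integral_sub (hg u hu) hgx, integral_div]
  refine Tendsto.congr' (eventually_nhdsWithin_of_forall fun u hu ↦ (hslope u hu.1).symm) ?_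
  refine tendsto_integral_filter_of_dominated_convergence b ?_ ?_ hb ?_
  · filter_upwards [self_mem_nhdsWithin] with u hu
    simp only [slope_def_field]
    exact ((hg u hu.1).sub hgx).div_const _ |>.aestronglyMeasurable
  · filter_upwards [self_mem_nhdsWithin] with u hu
    filter_upwards [hbound u hu.1] with p hp
    rw [slope_def_field, Real.norm_eq_abs, abs_div,
      div_le_iff₀ (abs_pos.mpr (sub_ne_zero.mpr hu.2))]
    exact hp
  · filter_upwards [hderiv] with p hp
    exact (hasDerivWithinAt_iff_tendsto_slope.mp hp)

lemma ae_prod_of_ae_of_ae {α β : Type*} [MeasurableSpace α] [MeasurableSpace β]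
    {μ : Measure α} {ν : Measure β} [SFinite ν] {P : α → Prop} {Q : β → Prop}
    (hP : ∀ᵐ x ∂μ, P x) (hQ : ∀ᵐ y ∂ν, Q y) : ∀ᵐ z ∂μ.prod ν, P z.1 ∧ Q z.2 :=
  (Measure.quasiMeasurePreserving_fst.ae hP).and (Measure.quasiMeasurePreserving_snd.ae hQ)

lemma integral_Ioo_exp_neg_mul {a : ℝ} (ha : a ≠ 0) {t : ℝ} (ht : 0 ≤ t) :
    ∫ s in Ioo 0 t, exp (-a * s) = (1 - exp (-a * t)) / a := by
  have hderiv : ∀ s ∈ uIcc 0 t, HasDerivAt (fun s ↦ exp (-a * s) / -a) (exp (-a * s)) s := by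
    intro s _
    have h : HasDerivAt (fun s ↦ -a * s) (-a) s := by
      simpa using (hasDerivAt_id s).const_mul (-a)
    simpa [mul_div_cancel_right₀ _ ha] using h.exp.div_const (-a)
  rw [← integral_Ioc_eq_integral_Ioo, ← intervalIntegral.integral_of_le ht,
    intervalIntegral.integral_eq_sub_of_hasDerivAt hderiv
      ((continuous_exp.comp (continuous_const_mul (-a))).intervalIntegrable _ _),
    mul_zero, exp_zero]
  field_simp
  ring

lemma integrableOn_Ioi_zero_of_lintegral_lt_top {ν : Measure ℝ}
    (hν : ∫⁻ ξ in Ioi 0, ENNReal.ofReal ξ ∂ν < ∞) : IntegrableOn (fun ξ ↦ ξ) (Ioi 0) ν :=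
  ⟨measurable_id.aestronglyMeasurable,
    (hasFiniteIntegral_iff_ofReal (ae_restrict_of_forall_mem measurableSet_Ioi
      fun _ h ↦ le_of_lt h)).mpr hν⟩

lemma sigmaFinite_restrict_Ioi_zero_of_lintegral_lt_top {ν : Measure ℝ}
    (hν : ∫⁻ ξ in Ioi 0, ENNReal.ofReal ξ ∂ν < ∞) : SigmaFinite (ν.restrict (Ioi 0)) :=
  sigmaFinite_of_lintegral_lt_top (by fun_prop)
    (ae_restrict_of_forall_mem measurableSet_Ioi fun _ h ↦ ENNReal.ofReal_pos.mpr h |>.ne') hν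

theorem Delta_left_derivative_general (a σ t : ℝ) (ha : 0 < a) (ht : 0 < t)
    (ν : Measure ℝ)
    (hν : ∫⁻ ξ in Set.Ioi (0 : ℝ), ENNReal.ofReal ξ ∂ν < ⊤)
    (Δ : ℝ → ℝ)
    (hΔ : ∀ u : ℝ, u ≤ 0 →
      Δ u = ∫ s in Set.Ioo (0 : ℝ) t, ∫ ξ in Set.Ioi (0 : ℝ),
        (Real.exp (ξ * u * Real.exp (-a * s) /
          (1 - σ ^ 2 / (2 * a) * (1 - Real.exp (-a * s)) * u)) - 1) ∂ν) :
    (∀ u : ℝ, u ≤ 0 → ∀ s : ℝ, s ∈ Set.Icc 0 t → ∀ ξ : ℝ, 0 < ξ →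
      ∃ d : ℝ,
        HasDerivAt (fun v : ℝ => Real.exp (ξ * v * Real.exp (-a * s) /
            (1 - σ ^ 2 / (2 * a) * (1 - Real.exp (-a * s)) * v))) d u ∧
        |d| ≤ ξ * Real.exp (-a * s)) ∧
    HasDerivWithinAt Δ
      ((1 - Real.exp (-a * t)) / a * (∫ ξ in Set.Ioi (0 : ℝ), ξ ∂ν))
      (Set.Iic (0 : ℝ)) 0 := by
  have hC : ∀ s, 0 ≤ s → 0 ≤ σ ^ 2 / (2 * a) * (1 - exp (-a * s)) := fun s hs ↦
    mul_nonneg (by positivity) (sub_nonneg.mpr (exp_le_one_iff.mpr (by nlinarith)))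
  refine ⟨fun u hu s hs ξ hξ ↦ ⟨_, hasDerivAt_exp_div_one_sub_mul _ _ _ _
    (by nlinarith [hC s hs.1]), abs_exp_div_one_sub_mul_deriv_le hξ.le (exp_pos _).le
    (hC s hs.1) hu⟩, ?_⟩
  have := sigmaFinite_restrict_Ioi_zero_of_lintegral_lt_top hν
  set μ := (volume.restrict (Ioo 0 t)).prod (ν.restrict (Ioi 0))
  set g : ℝ → ℝ × ℝ → ℝ := fun u p ↦
    exp (p.2 * u * exp (-a * p.1) / (1 - σ ^ 2 / (2 * a) * (1 - exp (-a * p.1)) * u)) - 1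
  have hmem : ∀ᵐ p ∂μ, p.1 ∈ Ioo 0 t ∧ p.2 ∈ Ioi 0 :=
    ae_prod_of_ae_of_ae (ae_restrict_mem measurableSet_Ioo) (ae_restrict_mem measurableSet_Ioi)
  have hexp : IntegrableOn (fun s ↦ exp (-a * s)) (Ioo 0 t) :=
    (continuous_exp.comp (continuous_const_mul (-a))).integrableOn_Ioc.mono_set
      Ioo_subset_Ioc_self
  have hb : Integrable (fun p : ℝ × ℝ ↦ exp (-a * p.1) * p.2) μ :=
    hexp.mul_prod (integrableOn_Ioi_zero_of_lintegral_lt_top hν)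
  have hbound : ∀ u ∈ Iic (0 : ℝ), ∀ᵐ p ∂μ,
      |g u p - g 0 p| ≤ exp (-a * p.1) * p.2 * |u - 0| := by
    intro u hu
    filter_upwards [hmem] with p ⟨hs, hξ⟩
    simpa [g, mul_comm (exp _)] using abs_exp_div_one_sub_mul_sub_one_le (le_of_lt hξ)
      (exp_pos (-a * p.1)).le (hC p.1 hs.1.le) hu
  have hg : ∀ u ∈ Iic (0 : ℝ), Integrable (g u) μ := fun u hu ↦
    Integrable.mono' (hb.mul_const |u|) (by fun_prop) (by simpa [g] using hbound u hu)
  have hderiv : ∀ᵐ p ∂μ, HasDerivWithinAt (g · p) (exp (-a * p.1) * p.2) (Iic 0) 0 :=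
    ae_of_all _ fun p ↦ ((hasDerivAt_exp_div_one_sub_mul_zero _ _ _).sub_const 1)
      |>.hasDerivWithinAt.congr_deriv (mul_comm _ _)
  have hΔg : ∀ u ∈ Iic (0 : ℝ), Δ u = ∫ p, g u p ∂μ := fun u hu ↦ by
    rw [hΔ u hu, integral_prod _ (hg u hu)]
  have hlim : ∫ p, exp (-a * p.1) * p.2 ∂μ = (1 - exp (-a * t)) / a * ∫ ξ in Ioi 0, ξ ∂ν := by
    rw [integral_prod_mul (f := fun s ↦ exp (-a * s)) (g := fun ξ ↦ ξ),
      integral_Ioo_exp_neg_mul ha.ne' ht.le]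
  rw [← hlim]
  exact (hasDerivWithinAt_integral_of_abs_sub_le hg (hg 0 self_mem_Iic) hb hbound hderiv).congr
    hΔg (hΔg 0 self_mem_Iic)

/-- For `u ≤ 0`, the `u`-derivative of `e^{ξue^{-as}/(1-(σ²/(2a))(1-e^{-as})u)}` is bounded
by `ξ e^{-as}`; consequently, if `∫ ξ ν(dξ) < ∞`, the function
`Δ(u) = ∫₀^t ∫_{(0,∞)} (e^{ξue^{-as}/(1-(σ²/(2a))(1-e^{-as})u)} - 1) ν(dξ) ds` is
differentiable at `u = 0` from the left with `Δ'(0) = ((1-e^{-at})/a) ∫ ξ ν(dξ)`. -/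
theorem Delta_left_derivative (a σ t : ℝ) (ha : 0 < a) (hσ : 0 < σ) (ht : 0 < t)
    (ν : Measure ℝ)
    (hν : ∫⁻ ξ in Set.Ioi (0 : ℝ), ENNReal.ofReal ξ ∂ν < ⊤)
    (Δ : ℝ → ℝ)
    (hΔ : ∀ u : ℝ, u ≤ 0 →
      Δ u = ∫ s in Set.Ioo (0 : ℝ) t, ∫ ξ in Set.Ioi (0 : ℝ),
        (Real.exp (ξ * u * Real.exp (-a * s) /
          (1 - σ ^ 2 / (2 * a) * (1 - Real.exp (-a * s)) * u)) - 1) ∂ν) :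
    (∀ u : ℝ, u ≤ 0 → ∀ s : ℝ, s ∈ Set.Icc 0 t → ∀ ξ : ℝ, 0 < ξ →
      ∃ d : ℝ,
        HasDerivAt (fun v : ℝ => Real.exp (ξ * v * Real.exp (-a * s) /
            (1 - σ ^ 2 / (2 * a) * (1 - Real.exp (-a * s)) * v))) d u ∧
        |d| ≤ ξ * Real.exp (-a * s)) ∧
    HasDerivWithinAt Δ
      ((1 - Real.exp (-a * t)) / a * (∫ ξ in Set.Ioi (0 : ℝ), ξ ∂ν))
      (Set.Iic (0 : ℝ)) 0 :=
  Delta_left_derivative_general a σ t ha ht ν hν Δ hΔ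
end

section
/- Let Y be a nonnegative random variable with E[e^{uY}] = (1 - (σ²/(2a))u(1-e^{-at}))^{-2aθ/σ²} · exp(x u e^{-at}/(1 - (σ²/(2a))u(1-e^{-at}))) for all real u ≤ 0 (the CIR transform). Then E[Y] = θ(1 - e^{-at}) + x e^{-at}. -/
/-!
The slopes `(exp (u * y) - 1) / u` are nonnegative for `y ≥ 0, u < 0`, increase as `u ↑ 0`
(convexity of `exp`) and tend to `y`. Monotone convergence applied to these slopes of `Y` shows
that `Y` is integrable with `E[Y]` equal to the left derivative at `0` of `u ↦ E[exp (u * Y)]`.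
For the CIR transform this derivative is read off from the closed formula.
-/

open MeasureTheory Filter Topology Set Real

lemma convexOn_exp_mul_const (y : ℝ) : ConvexOn ℝ univ fun v : ℝ => exp (v * y) := by
  simpa [Function.comp_def, mul_comm] using convexOn_exp.comp_linearMap (LinearMap.mul ℝ ℝ y)

lemma hasDerivAt_one_sub_mul_rpow_mul_exp (k p b : ℝ) :
    HasDerivAt (fun u : ℝ => (1 - k * u) ^ p * exp (b * u / (1 - k * u))) (b - p * k) 0 := by
  have hbase : HasDerivAt (fun u : ℝ => 1 - k * u) (-k) 0 := by
    simpa using ((hasDerivAt_id (0 : ℝ)).const_mul k).const_sub 1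
  have hfrac : HasDerivAt (fun u : ℝ => b * u / (1 - k * u)) b 0 := by
    simpa using ((hasDerivAt_id' (0 : ℝ)).const_mul b).fun_div hbase (by simp)
  exact ((hbase.rpow_const (p := p) (Or.inl (by simp))).mul hfrac.exp).congr_deriv
    (by simp; ring)

section

variable {Ω : Type*} [MeasurableSpace Ω] {μ : Measure Ω}

theorem integrable_and_integral_eq_of_monotone_of_tendsto {g : ℕ → Ω → ℝ} {f : Ω → ℝ} {m : ℝ}
    (hg : ∀ n, Integrable (g n) μ) (hg_nonneg : ∀ n, 0 ≤ᵐ[μ] g n)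
    (h_mono : ∀ᵐ ω ∂μ, Monotone fun n => g n ω)
    (h_tendsto : ∀ᵐ ω ∂μ, Tendsto (fun n => g n ω) atTop (𝓝 (f ω)))
    (h_integral : Tendsto (fun n => ∫ ω, g n ω ∂μ) atTop (𝓝 m)) :
    Integrable f μ ∧ ∫ ω, f ω ∂μ = m := by
  have hf_nonneg : 0 ≤ᵐ[μ] f := by
    filter_upwards [h_tendsto, ae_all_iff.2 hg_nonneg] with ω hω hω_nonneg
    exact ge_of_tendsto' hω hω_nonneg
  have hlintegral : ∫⁻ ω, ENNReal.ofReal (f ω) ∂μ = ENNReal.ofReal m := by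
    refine tendsto_nhds_unique (lintegral_tendsto_of_tendsto_of_monotone
      (fun n => (hg n).aemeasurable.ennreal_ofReal) ?_ ?_) ?_
    · filter_upwards [h_mono] with ω hω n k hnk using ENNReal.ofReal_le_ofReal (hω hnk)
    · filter_upwards [h_tendsto] with ω hω using (ENNReal.continuous_ofReal.tendsto _).comp hω
    · simp_rw [← ofReal_integral_eq_lintegral_ofReal (hg _) (hg_nonneg _)]
      exact (ENNReal.continuous_ofReal.tendsto m).comp h_integral
  have hf : Integrable f μ :=
    ⟨aestronglyMeasurable_of_tendsto_ae atTop (fun n => (hg n).1) h_tendsto,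
      by rw [hasFiniteIntegral_iff_ofReal hf_nonneg, hlintegral]; exact ENNReal.ofReal_lt_top⟩
  exact ⟨hf, tendsto_nhds_unique
    (integral_tendsto_of_tendsto_of_monotone hg hf h_mono h_tendsto) h_integral⟩

variable [IsFiniteMeasure μ] {Y : Ω → ℝ}

lemma integrable_exp_mul_of_nonpos (hY : AEMeasurable Y μ) (hY_nonneg : 0 ≤ᵐ[μ] Y) {u : ℝ}
    (hu : u ≤ 0) : Integrable (fun ω => exp (u * Y ω)) μ := by
  refine Integrable.of_bound (hY.const_mul u).exp.aestronglyMeasurable 1 ?_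
  filter_upwards [hY_nonneg] with ω hω
  rw [norm_of_nonneg (exp_nonneg _), exp_le_one_iff]
  exact mul_nonpos_of_nonpos_of_nonneg hu hω

lemma integrable_slope_exp_mul (hY : AEMeasurable Y μ) (hY_nonneg : 0 ≤ᵐ[μ] Y) {u : ℝ}
    (hu : u ≤ 0) : Integrable (fun ω => slope (fun v => exp (v * Y ω)) 0 u) μ := by
  simp only [slope_def_module, smul_eq_mul]
  exact ((integrable_exp_mul_of_nonpos hY hY_nonneg hu).sub
    (integrable_exp_mul_of_nonpos hY hY_nonneg le_rfl)).const_mul _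

lemma integral_slope_exp_mul (hY : AEMeasurable Y μ) (hY_nonneg : 0 ≤ᵐ[μ] Y) {u : ℝ}
    (hu : u ≤ 0) :
    ∫ ω, slope (fun v => exp (v * Y ω)) 0 u ∂μ = slope (fun v => ∫ ω, exp (v * Y ω) ∂μ) 0 u := by
  simp only [slope_def_module, smul_eq_mul]
  rw [integral_const_mul, integral_sub (integrable_exp_mul_of_nonpos hY hY_nonneg hu)
    (integrable_exp_mul_of_nonpos hY hY_nonneg le_rfl)]

theorem integrable_and_integral_eq_of_hasDerivWithinAt_integral_exp_mul (hY : AEMeasurable Y μ)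
    (hY_nonneg : 0 ≤ᵐ[μ] Y) {m : ℝ}
    (hm : HasDerivWithinAt (fun u => ∫ ω, exp (u * Y ω) ∂μ) m (Iio 0) 0) :
    Integrable Y μ ∧ ∫ ω, Y ω ∂μ = m := by
  obtain ⟨u, hu_mono, hu_neg, hu_lim⟩ := exists_seq_strictMono_tendsto_nhdsWithin (0 : ℝ)
  have tendsto_slope {F : ℝ → ℝ} {d : ℝ} (hF : HasDerivWithinAt F d (Iio 0) 0) :
      Tendsto (fun n => slope F 0 (u n)) atTop (𝓝 d) :=
    ((hasDerivWithinAt_iff_tendsto_slope' self_notMem_Iio).1 hF).comp hu_lim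
  refine integrable_and_integral_eq_of_monotone_of_tendsto
    (g := fun n ω => slope (fun v => exp (v * Y ω)) 0 (u n))
    (fun n => integrable_slope_exp_mul hY hY_nonneg (hu_neg n).le) (fun n => ?_) ?_ ?_ ?_
  · filter_upwards [hY_nonneg] with ω hω
    exact ((exp_monotone.comp (monotone_mul_right_of_nonneg hω)).monotoneOn univ).slope_nonneg
      trivial trivial
  · exact Eventually.of_forall fun ω n k hnk => (convexOn_exp_mul_const (Y ω)).slope_mono
      (mem_univ 0) ⟨trivial, (hu_neg n).ne⟩ ⟨trivial, (hu_neg k).ne⟩ (hu_mono.monotone hnk)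
  · refine Eventually.of_forall fun ω => tendsto_slope ?_
    simpa using ((hasDerivAt_id' (0 : ℝ)).mul_const (Y ω)).exp.hasDerivWithinAt
  · refine (tendsto_slope hm).congr fun n => ?_
    exact (integral_slope_exp_mul hY hY_nonneg (hu_neg n).le).symm

end

theorem expectation_CIR_general (a σ θ x t : ℝ) (ha : 0 < a) (hσ : 0 < σ)
    {Ω : Type*} [MeasureSpace Ω] [IsProbabilityMeasure (volume : Measure Ω)]
    (Y : Ω → ℝ) (hYmeas : Measurable Y) (hYpos : ∀ ω, 0 ≤ Y ω)
    (hlaplace : ∀ u : ℝ, u ≤ 0 →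
      ∫ ω, Real.exp (u * Y ω) =
        (1 - σ ^ 2 / (2 * a) * u * (1 - Real.exp (-a * t))) ^ (-(2 * a * θ) / σ ^ 2) *
          Real.exp (x * u * Real.exp (-a * t) /
            (1 - σ ^ 2 / (2 * a) * u * (1 - Real.exp (-a * t))))) :
    Integrable Y ∧ ∫ ω, Y ω = θ * (1 - Real.exp (-a * t)) + x * Real.exp (-a * t) := by
  have hF := hasDerivAt_one_sub_mul_rpow_mul_exp (σ ^ 2 / (2 * a) * (1 - exp (-a * t)))
    (-(2 * a * θ) / σ ^ 2) (x * exp (-a * t))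
  refine integrable_and_integral_eq_of_hasDerivWithinAt_integral_exp_mul hYmeas.aemeasurable
    (ae_of_all _ hYpos) ((hF.hasDerivWithinAt.congr (fun u hu => ?_) ?_).congr_deriv ?_)
  · rw [hlaplace u (le_of_lt hu)]; ring_nf
  · rw [hlaplace 0 le_rfl]; ring_nf
  · field_simp; ring

/-- If the nonnegative random variable `Y` has the CIR Laplace transform
`E[e^{uY}] = (1 - (σ²/(2a))u(1-e^{-at}))^{-2aθ/σ²} exp(xue^{-at}/(1-(σ²/(2a))u(1-e^{-at})))`
for all `u ≤ 0`, then `E[Y] = θ(1-e^{-at}) + xe^{-at}`. -/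
theorem expectation_CIR (a σ θ x t : ℝ) (ha : 0 < a) (hσ : 0 < σ) (hθ : 0 ≤ θ)
    (hx : 0 ≤ x) (ht : 0 < t)
    {Ω : Type*} [MeasureSpace Ω] [IsProbabilityMeasure (volume : Measure Ω)]
    (Y : Ω → ℝ) (hYmeas : Measurable Y) (hYpos : ∀ ω, 0 ≤ Y ω)
    (hlaplace : ∀ u : ℝ, u ≤ 0 →
      ∫ ω, Real.exp (u * Y ω) =
        (1 - σ ^ 2 / (2 * a) * u * (1 - Real.exp (-a * t))) ^ (-(2 * a * θ) / σ ^ 2) *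
          Real.exp (x * u * Real.exp (-a * t) /
            (1 - σ ^ 2 / (2 * a) * u * (1 - Real.exp (-a * t))))) :
    Integrable Y ∧ ∫ ω, Y ω = θ * (1 - Real.exp (-a * t)) + x * Real.exp (-a * t) :=
  expectation_CIR_general a σ θ x t ha hσ Y hYmeas hYpos hlaplace
end
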